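/- Let A be a generalised Poisson affine space over a field k of characteristic zero, so A = ⊕_{λ∈Λ} A_λ is Poisson graded by its weight spaces. Then every nonzero Poisson ideal I of A contains a nonzero homogeneous element, i.e. a nonzero element of some weight space A_λ. -/

import Mathlib

/-!
The weight spaces `A_D = {a | {b, a} = D b * a}`, for `D` in the additive monoid `Λ` generated
by the weight derivations of the generators, span `A`, satisfy `A_D * A_E ⊆ A_{D+E}`, and are
preserved by every weight in `Λ` (Jacobi identity plus commutation of the weights).
Write a nonzero `a ∈ I` as a sum of homogeneous components and induct on their number.
If two components have distinct weights `D ≠ E`, some homogeneous `b` separates them; then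
`D b * a - {b, a}` and `E b * a - {b, a}` lie in `I`, are sums of fewer homogeneous components,
and differ by `(D b - E b) * a ≠ 0`, so one of them is nonzero.
-/

/-- A Poisson bracket on a commutative `k`-algebra `A`: a `k`-bilinear Lie bracket
satisfying the Leibniz rule. -/
structure IsPoissonBracket (k : Type*) (A : Type*) [CommRing k] [CommRing A] [Algebra k A]
    (P : A → A → A) : Prop where
  add_left : ∀ a b c : A, P (a + b) c = P a c + P b c
  smul_left : ∀ (r : k) (a b : A), P (r • a) b = r • P a b
  lie_skew : ∀ a b : A, P a b = - P b a
  jacobi : ∀ a b c : A, P a (P b c) + P b (P c a) + P c (P a b) = 0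
  leibniz : ∀ a b c : A, P (a * b) c = a * P b c + b * P a c

theorem Derivation.apply_comm_of_mem_closure {k A ι : Type*} [CommRing k] [CommRing A]
    [Algebra k A] {D : ι → Derivation k A A} (hcomm : ∀ i j u, D i (D j u) = D j (D i u))
    {F : Derivation k A A} (hF : F ∈ AddSubmonoid.closure (Set.range D)) (i : ι) (u : A) :
    D i (F u) = F (D i u) := by
  induction hF using AddSubmonoid.closure_induction with
  | mem _ h => obtain ⟨j, rfl⟩ := h; exact hcomm i j u
  | zero => simp
  | add _ _ _ _ h h' => simp [h, h']

namespace IsPoissonBracket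

variable {k A : Type*} [CommRing k] [CommRing A] [Algebra k A] {P : A → A → A}
  (hP : IsPoissonBracket k A P)
include hP

theorem add_right (a b c : A) : P a (b + c) = P a b + P a c := by
  rw [hP.lie_skew a, hP.add_left, hP.lie_skew b, hP.lie_skew c, neg_add, neg_neg, neg_neg]

theorem smul_right (r : k) (a b : A) : P a (r • b) = r • P a b := by
  rw [hP.lie_skew a, hP.smul_left, hP.lie_skew b, smul_neg, neg_neg]

theorem leibniz_right (a b c : A) : P a (b * c) = b * P a c + c * P a b := by
  rw [hP.lie_skew a, hP.leibniz, hP.lie_skew b, hP.lie_skew c]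
  ring

def hamiltonian (a : A) : Derivation k A A :=
  Derivation.mk' ⟨⟨P a, hP.add_right a⟩, fun r b => hP.smul_right r a b⟩ (hP.leibniz_right a)

@[simp]
theorem hamiltonian_apply (a b : A) : hP.hamiltonian a b = P a b := rfl

def weightSpace (D : Derivation k A A) : Submodule k A where
  carrier := {a | ∀ b, P b a = D b * a}
  add_mem' {a a'} ha ha' b := by
    rw [← hP.hamiltonian_apply, map_add, hP.hamiltonian_apply, hP.hamiltonian_apply, ha, ha',
      mul_add]
  zero_mem' b := by rw [← hP.hamiltonian_apply, map_zero, mul_zero]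
  smul_mem' r a ha b := by
    rw [← hP.hamiltonian_apply, Derivation.map_smul, hP.hamiltonian_apply, ha, mul_smul_comm]

theorem one_mem_weightSpace_zero : (1 : A) ∈ hP.weightSpace 0 := fun b => by
  rw [← hP.hamiltonian_apply, Derivation.map_one_eq_zero, Derivation.zero_apply, zero_mul]

theorem mul_mem_weightSpace {D E : Derivation k A A} {a a' : A} (ha : a ∈ hP.weightSpace D)
    (ha' : a' ∈ hP.weightSpace E) : a * a' ∈ hP.weightSpace (D + E) := fun b => by
  rw [hP.leibniz_right, ha b, ha' b, Derivation.add_apply]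
  ring

def homogeneousSubmonoid (Λ : AddSubmonoid (Derivation k A A)) : Submonoid A where
  carrier := {a | ∃ D ∈ Λ, a ∈ hP.weightSpace D}
  one_mem' := ⟨0, Λ.zero_mem, hP.one_mem_weightSpace_zero⟩
  mul_mem' := fun ⟨D, hD, ha⟩ ⟨E, hE, ha'⟩ =>
    ⟨D + E, Λ.add_mem hD hE, hP.mul_mem_weightSpace ha ha'⟩

theorem span_homogeneousSubmonoid_eq_top {ι : Type*} {x : ι → A} {D : ι → Derivation k A A}
    (hx : ∀ i, x i ∈ hP.weightSpace (D i)) (hgen : Algebra.adjoin k (Set.range x) = ⊤) :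
    Submodule.span k (hP.homogeneousSubmonoid (AddSubmonoid.closure (Set.range D)) : Set A) =
      ⊤ := by
  rw [eq_top_iff, ← Algebra.top_toSubmodule, ← hgen, Algebra.adjoin_eq_span]
  refine Submodule.span_mono (Submonoid.closure_le.mpr (Set.range_subset_iff.mpr fun i => ?_))
  exact ⟨D i, AddSubmonoid.subset_closure (Set.mem_range_self i), hx i⟩

theorem exists_apply_ne_of_ne {Λ : AddSubmonoid (Derivation k A A)}
    (hspan : Submodule.span k (hP.homogeneousSubmonoid Λ : Set A) = ⊤)
    {D E : Derivation k A A} (hDE : D ≠ E) :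
    ∃ b ∈ hP.homogeneousSubmonoid Λ, D b ≠ E b := by
  by_contra! h
  exact hDE <| Derivation.ext <| LinearMap.congr_fun <| LinearMap.ext_on hspan h

theorem mul_sum_sub_bracket_sum {m : ℕ} {g : Fin (m + 1) → A}
    {E : Fin (m + 1) → Derivation k A A} (hg : ∀ i, g i ∈ hP.weightSpace (E i))
    (j : Fin (m + 1)) (b : A) :
    E j b * ∑ i, g i - P b (∑ i, g i) =
      ∑ i : Fin m, (E j b - E (j.succAbove i) b) * g (j.succAbove i) := by
  rw [← hP.hamiltonian_apply, map_sum, Finset.mul_sum, ← Finset.sum_sub_distrib,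
    Fin.sum_univ_succAbove _ j]
  simp only [hamiltonian_apply, hg _ b, sub_self, zero_add, sub_mul]

section Domain

variable [IsDomain A]

def normalDerivation {x : A} {δ : A → A} (hx : ∀ b, P b x = δ b * x) (hx0 : x ≠ 0) :
    Derivation k A A :=
  Derivation.mk'
    { toFun := δ
      map_add' a b := mul_right_cancel₀ hx0 <| by rw [← hx, hP.add_left, hx, hx, add_mul]
      map_smul' r a := mul_right_cancel₀ hx0 <| by
        rw [← hx, hP.smul_left, hx, RingHom.id_apply, smul_mul_assoc] }
    fun a b => mul_right_cancel₀ hx0 <| by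
      simp only [LinearMap.coe_mk, AddHom.coe_mk, smul_eq_mul]
      rw [← hx, hP.leibniz, hx, hx]
      ring

@[simp]
theorem coe_normalDerivation {x : A} {δ : A → A} (hx : ∀ b, P b x = δ b * x) (hx0 : x ≠ 0) :
    ⇑(hP.normalDerivation hx hx0) = δ := rfl

theorem apply_bracket_of_mem_weightSpace {x : A} {E : Derivation k A A}
    (hx : x ∈ hP.weightSpace E) (hx0 : x ≠ 0) (u b : A) :
    E (P u b) = P u (E b) - P b (E u) := by
  refine mul_right_cancel₀ hx0 ?_
  have jacobi := hP.jacobi u b x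
  rw [hx b, hP.lie_skew x u, hx u, hP.lie_skew x (P u b), hx (P u b), hP.leibniz_right,
    ← hP.hamiltonian_apply b (-_), map_neg, hP.hamiltonian_apply, hP.leibniz_right, hx u,
    hx b] at jacobi
  linear_combination -jacobi

theorem apply_mem_weightSpace {x : A} {D E : Derivation k A A} (hx : x ∈ hP.weightSpace E)
    (hx0 : x ≠ 0) (hDE : ∀ u, E (D u) = D (E u)) {b : A} (hb : b ∈ hP.weightSpace D) :
    E b ∈ hP.weightSpace D := fun u => by
  have hEb := hP.apply_bracket_of_mem_weightSpace hx hx0 u b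
  rw [hb u, Derivation.leibniz, hDE, smul_eq_mul, smul_eq_mul, hP.lie_skew b, hb] at hEb
  linear_combination -hEb

theorem apply_mem_weightSpace_of_mem_closure {ι : Type*} {x : ι → A}
    {D : ι → Derivation k A A} (hx : ∀ i, x i ∈ hP.weightSpace (D i)) (hx0 : ∀ i, x i ≠ 0)
    (hcomm : ∀ i j u, D i (D j u) = D j (D i u)) :
    ∀ F ∈ AddSubmonoid.closure (Set.range D), ∀ E ∈ AddSubmonoid.closure (Set.range D),
      ∀ b ∈ hP.weightSpace F, E b ∈ hP.weightSpace F := by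
  intro F hF E hE b hb
  induction hE using AddSubmonoid.closure_induction with
  | mem _ h =>
    obtain ⟨i, rfl⟩ := h
    exact hP.apply_mem_weightSpace (hx i) (hx0 i)
      (Derivation.apply_comm_of_mem_closure hcomm hF i) hb
  | zero => exact zero_mem _
  | add _ _ _ _ h h' => exact add_mem h h'

variable {Λ : AddSubmonoid (Derivation k A A)}
  (hspan : Submodule.span k (hP.homogeneousSubmonoid Λ : Set A) = ⊤)
  (hpres : ∀ D ∈ Λ, ∀ E ∈ Λ, ∀ b ∈ hP.weightSpace D, E b ∈ hP.weightSpace D)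
  {I : Ideal A} (hI : ∀ a ∈ I, ∀ b, P b a ∈ I)
include hspan hpres hI

theorem exists_ne_zero_mem_homogeneous_of_sum {m : ℕ} {g : Fin m → A}
    {E : Fin m → Derivation k A A} (hE : ∀ i, E i ∈ Λ) (hg : ∀ i, g i ∈ hP.weightSpace (E i))
    (hgI : ∑ i, g i ∈ I) (hg0 : ∑ i, g i ≠ 0) :
    ∃ a ∈ I, a ≠ 0 ∧ a ∈ hP.homogeneousSubmonoid Λ := by
  induction m with
  | zero => simp at hg0
  | succ m ih =>
    by_cases hsame : ∀ i, E i = E 0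
    · exact ⟨_, hgI, hg0, E 0, hE 0, Submodule.sum_mem _ fun i _ => hsame i ▸ hg i⟩
    obtain ⟨i₁, hi₁⟩ := not_forall.mp hsame
    obtain ⟨b, ⟨F, hF, hb⟩, hbne⟩ := hP.exists_apply_ne_of_ne hspan hi₁
    obtain ⟨j, hj⟩ : ∃ j, E j b * ∑ i, g i - P b (∑ i, g i) ≠ 0 := by
      by_contra! h
      apply mul_ne_zero (sub_ne_zero.mpr hbne) hg0
      linear_combination h i₁ - h 0
    have hjI : E j b * ∑ i, g i - P b (∑ i, g i) ∈ I :=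
      sub_mem (I.mul_mem_left _ hgI) (hI _ hgI b)
    rw [hP.mul_sum_sub_bracket_sum hg] at hj hjI
    refine ih (E := fun i => F + E (j.succAbove i)) (fun i => Λ.add_mem hF (hE _))
      (fun i => ?_) hjI hj
    exact hP.mul_mem_weightSpace (sub_mem (hpres F hF _ (hE j) b hb) (hpres F hF _ (hE _) b hb))
      (hg _)

theorem exists_ne_zero_mem_homogeneous_of_ne_bot (hI0 : I ≠ ⊥) :
    ∃ a ∈ I, a ≠ 0 ∧ a ∈ hP.homogeneousSubmonoid Λ := by
  obtain ⟨a, haI, ha0⟩ := Submodule.exists_mem_ne_zero_of_ne_bot hI0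
  obtain ⟨m, r, g, rfl⟩ := Submodule.mem_span_set'.mp (hspan ▸ Submodule.mem_top : a ∈ _)
  choose E hE hg using fun i => (g i).2
  exact hP.exists_ne_zero_mem_homogeneous_of_sum hspan hpres hI hE
    (fun i => Submodule.smul_mem _ (r i) (hg i)) haI ha0

end Domain

end IsPoissonBracket

theorem poisson_ideal_contains_homogeneous_general
    {k A : Type*} [Field k] [CommRing A] [IsDomain A] [Algebra k A]
    (P : A → A → A) (hP : IsPoissonBracket k A P)
    (n : ℕ) (x : Fin n → A) (l : Fin n → A → A)
    (hgen : Algebra.adjoin k (Set.range x) = ⊤)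
    (hx : ∀ (i : Fin n) (b : A), P b (x i) = l i b * x i)
    (hxne : ∀ i : Fin n, x i ≠ 0)
    (hcomm : ∀ (i j : Fin n) (a : A), l i (l j a) = l j (l i a))
    (I : Ideal A) (hIP : ∀ a ∈ I, ∀ b : A, P b a ∈ I) (hIne : I ≠ ⊥) :
    ∃ a ∈ I, a ≠ 0 ∧ ∃ c : Fin n → ℕ,
      ∀ b : A, P b a = (∑ i : Fin n, c i • l i b) * a := by
  let D i := hP.normalDerivation (hx i) (hxne i)
  have hxD : ∀ i, x i ∈ hP.weightSpace (D i) := hx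
  obtain ⟨a, haI, ha0, E, hE, ha⟩ := hP.exists_ne_zero_mem_homogeneous_of_ne_bot
    (hP.span_homogeneousSubmonoid_eq_top hxD hgen)
    (hP.apply_mem_weightSpace_of_mem_closure hxD hxne hcomm) hIP hIne
  obtain ⟨c, rfl⟩ := AddSubmonoid.mem_closure_range_iff_of_fintype.mp hE
  refine ⟨a, haI, ha0, c, fun b => ?_⟩
  rw [ha b, ← Derivation.coeFnAddMonoidHom_apply, map_sum]
  simp [D]

/-- In a generalised Poisson affine space, every nonzero Poisson ideal contains a
nonzero homogeneous element, i.e. a nonzero Poisson normal element whose weight lies in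
the monoid generated by the weights of the generators. -/
theorem poisson_ideal_contains_homogeneous
    {k A : Type*} [Field k] [CharZero k] [CommRing A] [IsDomain A] [Algebra k A]
    (P : A → A → A) (hP : IsPoissonBracket k A P)
    (n : ℕ) (x : Fin n → A) (l : Fin n → A → A)
    (hgen : Algebra.adjoin k (Set.range x) = ⊤)
    (hx : ∀ (i : Fin n) (b : A), P b (x i) = l i b * x i)
    (hxne : ∀ i : Fin n, x i ≠ 0)
    (hcomm : ∀ (i j : Fin n) (a : A), l i (l j a) = l j (l i a))
    (I : Ideal A) (hIP : ∀ a ∈ I, ∀ b : A, P b a ∈ I) (hIne : I ≠ ⊥) :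
    ∃ a ∈ I, a ≠ 0 ∧ ∃ c : Fin n → ℕ,
      ∀ b : A, P b a = (∑ i : Fin n, c i • l i b) * a :=
  poisson_ideal_contains_homogeneous_general P hP n x l hgen hx hxne hcomm I hIP hIne
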